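/- arXiv:2111.10282 — 4 statements merged into one kernel-verified Lean document; each statement's English description precedes it below -/
import Mathlib

section
/- Classical upper Bogoliubov (Gibbs–Bogoliubov) inequality: −β⁻¹ log(∫ e^{−β(H₀+U)}) + β⁻¹ log(∫ e^{−βH₀}) ≤ ∫ U p₀, i.e. ΔF ≤ E_{p₀}[U]. -/
open MeasureTheory Real

/-! With the Boltzmann density `p₀` and `V = -βU`, the inequality is Jensen's inequality
`exp (∫ V p₀) ≤ ∫ exp V · p₀ = Z / Z₀` for the convex function `exp`, after taking logarithms.
Jensen is obtained here by integrating the tangent line `exp c · (1 + t - c) ≤ exp t` at the mean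
`c = ∫ V p₀` against `p₀`. -/

theorem exp_integral_mul_le_integral_exp_mul {Ω : Type*} [MeasurableSpace Ω] {μ : Measure Ω}
    {w V : Ω → ℝ} (hw : 0 ≤ w) (hw_int : Integrable w μ) (hw_one : ∫ x, w x ∂μ = 1)
    (hVw : Integrable (fun x => V x * w x) μ)
    (hexpVw : Integrable (fun x => exp (V x) * w x) μ) :
    exp (∫ x, V x * w x ∂μ) ≤ ∫ x, exp (V x) * w x ∂μ := by
  set c := ∫ x, V x * w x ∂μ
  have tangent : ∀ x, exp c * (1 - c) * w x + exp c * (V x * w x) ≤ exp (V x) * w x := by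
    intro x
    calc exp c * (1 - c) * w x + exp c * (V x * w x) = exp c * (1 + (V x - c)) * w x := by ring
      _ ≤ exp c * exp (V x - c) * w x := by
          gcongr
          · exact hw x
          · linarith [add_one_le_exp (V x - c)]
      _ = exp (V x) * w x := by rw [← exp_add, add_sub_cancel]
  calc exp c = ∫ x, (exp c * (1 - c) * w x + exp c * (V x * w x)) ∂μ := by
        rw [integral_add (hw_int.const_mul _) (hVw.const_mul _), integral_const_mul,
          integral_const_mul, hw_one]
        ring
    _ ≤ ∫ x, exp (V x) * w x ∂μ :=
        integral_mono ((hw_int.const_mul _).add (hVw.const_mul _)) hexpVw tangent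

theorem gibbs_bogoliubov_upper_general {Ω : Type*} [MeasurableSpace Ω] (μ : Measure Ω)
    (β : ℝ) (hβ : 0 < β) (H₀ U : Ω → ℝ)
    (Z Z₀ : ℝ)
    (hZ : Z = ∫ x, Real.exp (-β * (H₀ x + U x)) ∂μ)
    (hZ₀ : Z₀ = ∫ x, Real.exp (-β * H₀ x) ∂μ)
    (hZint : Integrable (fun x => Real.exp (-β * (H₀ x + U x))) μ)
    (hZ₀int : Integrable (fun x => Real.exp (-β * H₀ x)) μ)
    (hZpos : 0 < Z) (hZ₀pos : 0 < Z₀)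
    (p₀ : Ω → ℝ) (hp₀ : p₀ = fun x => Real.exp (-β * H₀ x) / Z₀)
    (hUp₀ : Integrable (fun x => U x * p₀ x) μ) :
    -β⁻¹ * Real.log Z + β⁻¹ * Real.log Z₀ ≤ ∫ x, U x * p₀ x ∂μ := by
  subst hp₀
  have boltzmann : ∀ x, exp (-β * U x) * (exp (-β * H₀ x) / Z₀) =
      exp (-β * (H₀ x + U x)) / Z₀ := fun x => by
    rw [← mul_div_assoc, ← exp_add]; ring_nf
  have jensen := exp_integral_mul_le_integral_exp_mul (μ := μ) (V := fun x => -β * U x)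
    (fun x => by positivity) (hZ₀int.div_const Z₀)
    (by rw [integral_div, ← hZ₀, div_self hZ₀pos.ne'])
    (by simpa only [mul_assoc] using hUp₀.const_mul (-β))
    (by simpa only [boltzmann] using hZint.div_const Z₀)
  simp only [mul_assoc, integral_const_mul, boltzmann, integral_div, ← hZ] at jensen
  rw [← le_log_iff_exp_le (by positivity), log_div hZpos.ne' hZ₀pos.ne'] at jensen
  rw [neg_mul, ← mul_neg, ← mul_add, inv_mul_le_iff₀ hβ]
  linarith

/-- Classical upper Bogoliubov (Gibbs–Bogoliubov) inequality:
`−β⁻¹ log ∫ e^{−β(H₀+U)} + β⁻¹ log ∫ e^{−βH₀} ≤ ∫ U p₀`, i.e. `ΔF ≤ E_{p₀}[U]`. -/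
theorem gibbs_bogoliubov_upper {Ω : Type*} [MeasurableSpace Ω] (μ : Measure Ω)
    (β : ℝ) (hβ : 0 < β) (H₀ U : Ω → ℝ) (hH₀ : Measurable H₀) (hU : Measurable U)
    (Z Z₀ : ℝ)
    (hZ : Z = ∫ x, Real.exp (-β * (H₀ x + U x)) ∂μ)
    (hZ₀ : Z₀ = ∫ x, Real.exp (-β * H₀ x) ∂μ)
    (hZint : Integrable (fun x => Real.exp (-β * (H₀ x + U x))) μ)
    (hZ₀int : Integrable (fun x => Real.exp (-β * H₀ x)) μ)
    (hZpos : 0 < Z) (hZ₀pos : 0 < Z₀)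
    (p₀ : Ω → ℝ) (hp₀ : p₀ = fun x => Real.exp (-β * H₀ x) / Z₀)
    (hUp₀ : Integrable (fun x => U x * p₀ x) μ) :
    -β⁻¹ * Real.log Z + β⁻¹ * Real.log Z₀ ≤ ∫ x, U x * p₀ x ∂μ :=
  gibbs_bogoliubov_upper_general μ β hβ H₀ U Z Z₀ hZ hZ₀ hZint hZ₀int hZpos hZ₀pos p₀ hp₀ hUp₀
end

section
/- Classical variational lower bound: for any bounded measurable φ, E_p[U + β⁻¹φ] − β⁻¹ log(E_{p₀}[e^{φ}]) ≤ ΔF. -/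
open MeasureTheory Real

/-!
Tilting by `e^{βU}` turns the Gibbs density `p₀` into `p`: `e^{φ + βU} p = (Z₀ / Z) e^φ p₀`.
Hence `log E_{p₀}[e^φ] = log (Z / Z₀) + log E_p[e^{φ + βU}]`, and Jensen's inequality for `exp`
under `p` bounds the last term below by `E_p[φ + βU]`; dividing by `β` gives the claim.
-/

section ProbabilityDensity

variable {Ω : Type*} [MeasurableSpace Ω] {μ : Measure Ω} {p ψ : Ω → ℝ}

theorem exp_integral_mul_le_integral_exp_mul_s4 (hp0 : 0 ≤ᵐ[μ] p) (hp : Integrable p μ)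
    (hp1 : ∫ x, p x ∂μ = 1) (hψ : Integrable (fun x => ψ x * p x) μ)
    (hexp : Integrable (fun x => exp (ψ x) * p x) μ) :
    exp (∫ x, ψ x * p x ∂μ) ≤ ∫ x, exp (ψ x) * p x ∂μ := by
  set a := ∫ x, ψ x * p x ∂μ
  -- the tangent line of `exp` at `a`, integrated against `p`
  have htangent : ∀ t, exp a * (1 + t - a) ≤ exp t := fun t => by
    calc exp a * (1 + t - a) ≤ exp a * exp (t - a) := by
          gcongr; linarith [add_one_le_exp (t - a)]
      _ = exp t := by rw [← exp_add]; ring_nf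
  have hline : Integrable (fun x => (1 - a) * p x + ψ x * p x) μ :=
    (hp.const_mul _).add hψ
  calc exp a = ∫ x, exp a * ((1 - a) * p x + ψ x * p x) ∂μ := by
        rw [integral_const_mul, integral_add (hp.const_mul _) hψ, integral_const_mul, hp1]
        ring
    _ ≤ ∫ x, exp (ψ x) * p x ∂μ := by
        refine integral_mono_ae (hline.const_mul _) hexp ?_
        filter_upwards [hp0] with x hx
        calc exp a * ((1 - a) * p x + ψ x * p x) = exp a * (1 + ψ x - a) * p x := by ring
          _ ≤ exp (ψ x) * p x := by gcongr; exact htangent (ψ x)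

theorem integral_exp_mul_pos (hp0 : 0 ≤ᵐ[μ] p) (hp : Integrable p μ)
    (hp1 : ∫ x, p x ∂μ = 1) (hψ : Integrable (fun x => ψ x * p x) μ)
    (hexp : Integrable (fun x => exp (ψ x) * p x) μ) :
    0 < ∫ x, exp (ψ x) * p x ∂μ :=
  (exp_pos _).trans_le (exp_integral_mul_le_integral_exp_mul_s4 hp0 hp hp1 hψ hexp)

theorem integral_mul_le_log_integral_exp_mul (hp0 : 0 ≤ᵐ[μ] p) (hp : Integrable p μ)
    (hp1 : ∫ x, p x ∂μ = 1) (hψ : Integrable (fun x => ψ x * p x) μ)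
    (hexp : Integrable (fun x => exp (ψ x) * p x) μ) :
    ∫ x, ψ x * p x ∂μ ≤ log (∫ x, exp (ψ x) * p x ∂μ) :=
  (le_log_iff_exp_le (integral_exp_mul_pos hp0 hp hp1 hψ hexp)).2
    (exp_integral_mul_le_integral_exp_mul_s4 hp0 hp hp1 hψ hexp)

end ProbabilityDensity

theorem variational_lower_bound_classical_general {Ω : Type*} [MeasurableSpace Ω] (μ : Measure Ω)
    (β : ℝ) (hβ : 0 < β) (H₀ U : Ω → ℝ)
    (H : Ω → ℝ) (hH : H = fun x => H₀ x + U x)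
    (Z Z₀ : ℝ)
    (hZ : Z = ∫ x, Real.exp (-β * H x) ∂μ)
    (hZint : Integrable (fun x => Real.exp (-β * H x)) μ)
    (hZpos : 0 < Z) (hZ₀pos : 0 < Z₀)
    (p p₀ : Ω → ℝ)
    (hp : p = fun x => Real.exp (-β * H x) / Z)
    (hp₀ : p₀ = fun x => Real.exp (-β * H₀ x) / Z₀)
    (hUp : Integrable (fun x => U x * p x) μ)
    (φ : Ω → ℝ)
    (hφp : Integrable (fun x => φ x * p x) μ)
    (hexp : Integrable (fun x => Real.exp (φ x) * p₀ x) μ) :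
    (∫ x, (U x + β⁻¹ * φ x) * p x ∂μ) - β⁻¹ * Real.log (∫ x, Real.exp (φ x) * p₀ x ∂μ)
      ≤ -β⁻¹ * Real.log (Z / Z₀) := by
  have hp0 : 0 ≤ᵐ[μ] p := .of_forall fun x => by rw [hp]; positivity
  have hpint : Integrable p μ := by rw [hp]; exact hZint.div_const Z
  have hp1 : ∫ x, p x ∂μ = 1 := by rw [hp, integral_div, ← hZ, div_self hZpos.ne']
  have htilt : ∀ x, exp (φ x + β * U x) * p x = Z₀ / Z * (exp (φ x) * p₀ x) := fun x => by
    rw [hp, hp₀, hH]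
    simp only [mul_add, neg_mul, exp_add, exp_neg]
    field_simp
  have hψ : Integrable (fun x => (φ x + β * U x) * p x) μ := by
    simpa only [add_mul, mul_assoc, Pi.add_def] using hφp.add (hUp.const_mul β)
  have hexpψ : Integrable (fun x => exp (φ x + β * U x) * p x) μ := by
    simpa only [htilt] using hexp.const_mul (Z₀ / Z)
  have hmean : ∫ x, (U x + β⁻¹ * φ x) * p x ∂μ = β⁻¹ * ∫ x, (φ x + β * U x) * p x ∂μ := by
    rw [← integral_const_mul]
    congr with x
    field_simp
    ring
  have hpartition : ∫ x, exp (φ x + β * U x) * p x ∂μ = Z₀ / Z * ∫ x, exp (φ x) * p₀ x ∂μ := by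
    simp only [htilt, integral_const_mul]
  have hE : 0 < ∫ x, exp (φ x) * p₀ x ∂μ := by
    have := integral_exp_mul_pos hp0 hpint hp1 hψ hexpψ
    rw [hpartition] at this
    exact pos_of_mul_pos_right this (by positivity)
  have hjensen := integral_mul_le_log_integral_exp_mul hp0 hpint hp1 hψ hexpψ
  rw [hpartition, log_mul (by positivity) hE.ne', log_div hZ₀pos.ne' hZpos.ne'] at hjensen
  rw [hmean, log_div hZpos.ne' hZ₀pos.ne']
  have := mul_le_mul_of_nonneg_left hjensen (inv_nonneg.2 hβ.le)
  linarith

/-- Classical variational lower bound: for any bounded measurable `φ`,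
`E_p[U + β⁻¹ φ] − β⁻¹ log E_{p₀}[e^φ] ≤ ΔF`. -/
theorem variational_lower_bound_classical {Ω : Type*} [MeasurableSpace Ω] (μ : Measure Ω)
    (β : ℝ) (hβ : 0 < β) (H₀ U : Ω → ℝ) (hH₀ : Measurable H₀) (hU : Measurable U)
    (H : Ω → ℝ) (hH : H = fun x => H₀ x + U x)
    (Z Z₀ : ℝ)
    (hZ : Z = ∫ x, Real.exp (-β * H x) ∂μ) (hZ₀ : Z₀ = ∫ x, Real.exp (-β * H₀ x) ∂μ)
    (hZint : Integrable (fun x => Real.exp (-β * H x)) μ)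
    (hZ₀int : Integrable (fun x => Real.exp (-β * H₀ x)) μ)
    (hZpos : 0 < Z) (hZ₀pos : 0 < Z₀)
    (p p₀ : Ω → ℝ)
    (hp : p = fun x => Real.exp (-β * H x) / Z)
    (hp₀ : p₀ = fun x => Real.exp (-β * H₀ x) / Z₀)
    (hUp : Integrable (fun x => U x * p x) μ)
    (φ : Ω → ℝ) (hφm : Measurable φ) (C : ℝ) (hφb : ∀ x, |φ x| ≤ C)
    (hφp : Integrable (fun x => φ x * p x) μ)
    (hexp : Integrable (fun x => Real.exp (φ x) * p₀ x) μ) :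
    (∫ x, (U x + β⁻¹ * φ x) * p x ∂μ) - β⁻¹ * Real.log (∫ x, Real.exp (φ x) * p₀ x ∂μ)
      ≤ -β⁻¹ * Real.log (Z / Z₀) :=
  variational_lower_bound_classical_general μ β hβ H₀ U H hH Z Z₀ hZ hZint hZpos hZ₀pos p p₀ hp hp₀
    hUp φ hφp hexp
end

section
/- Quantum Peierls–Bogoliubov upper bound: ΔF = −β⁻¹ log(Tr e^{−βH} / Tr e^{−βH₀}) ≤ Tr(ρ₀ U), where ρ₀ = e^{−βH₀}/Tr(e^{−βH₀}) and U = H − H₀. -/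
/-!
Diagonalize `H₀ = V diag(μ) V*` and put `wᵢ = Re (V* U V)ᵢᵢ`. In this basis the diagonal
entries of `-βH` are `-β(μᵢ + wᵢ)`, so Peierls' inequality `∑ᵢ exp Aᵢᵢ ≤ Tr exp A` for
Hermitian `A` gives `Z ≥ ∑ᵢ e^{-βμᵢ} e^{-βwᵢ}`. Peierls' inequality is itself Jensen's
inequality for `exp`: `Aᵢᵢ` and `(exp A)ᵢᵢ` are averages of the eigenvalues of `A` and of their
exponentials, with the same weights `|Wᵢⱼ|²` from a unitary diagonalization `W` of `A`.
Jensen once more, now with the Gibbs weights `e^{-βμᵢ} / Z₀`, gives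
`exp (-β Tr ρ₀U) ≤ Z / Z₀`.
-/

open Matrix

namespace Matrix

variable {n 𝕜 : Type*} [Fintype n] [DecidableEq n] [RCLike 𝕜] {V : Matrix n n 𝕜}

theorem exp_unitary_conj (hV : V ∈ unitaryGroup n 𝕜) (A : Matrix n n 𝕜) :
    NormedSpace.exp (V * A * star V) = V * NormedSpace.exp A * star V := by
  have hinv : V⁻¹ = star V := inv_eq_right_inv (Unitary.mul_star_self_of_mem hV)
  rw [← hinv]
  exact exp_conj V A (IsUnit.of_mul_eq_one _ (Unitary.mul_star_self_of_mem hV))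

theorem exp_unitary_conj_diagonal (hV : V ∈ unitaryGroup n 𝕜) (f : n → ℝ) :
    NormedSpace.exp (V * diagonal (RCLike.ofReal ∘ f) * star V) =
      V * diagonal (RCLike.ofReal ∘ Real.exp ∘ f) * star V := by
  rw [exp_unitary_conj hV, exp_diagonal]
  congr 3
  ext i
  simp [Real.exp_eq_exp_ℝ, ← NormedSpace.algebraMap_exp_comm]

theorem exp_real_smul_unitary_conj_diagonal (hV : V ∈ unitaryGroup n 𝕜) (c : ℝ) (f : n → ℝ) :
    NormedSpace.exp (c • (V * diagonal (RCLike.ofReal ∘ f) * star V)) =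
      V * diagonal (RCLike.ofReal ∘ fun i => Real.exp (c * f i)) * star V := by
  have hsmul : c • diagonal (RCLike.ofReal ∘ f : n → 𝕜) =
      diagonal (RCLike.ofReal ∘ fun i => c * f i) := by
    rw [← diagonal_smul]
    congr 1
    ext i
    simp [RCLike.real_smul_eq_coe_mul]
  rw [← smul_mul_assoc, ← mul_smul_comm, hsmul, exp_unitary_conj_diagonal hV]
  rfl

theorem trace_unitary_conj (hV : V ∈ unitaryGroup n 𝕜) (A : Matrix n n 𝕜) :
    trace (V * A * star V) = trace A := by
  rw [trace_mul_cycle, Unitary.star_mul_self_of_mem hV, one_mul]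

theorem trace_conj_diagonal_mul (V : Matrix n n 𝕜) (g : n → 𝕜) (B : Matrix n n 𝕜) :
    trace (V * diagonal g * star V * B) = ∑ i, g i * (star V * B * V) i i := by
  rw [Matrix.mul_assoc, trace_mul_comm, ← Matrix.mul_assoc]
  simp only [trace, diag_apply, mul_diagonal, mul_comm]

theorem trace_exp_real_smul_unitary_conj_diagonal (hV : V ∈ unitaryGroup n 𝕜) (c : ℝ)
    (f : n → ℝ) :
    trace (NormedSpace.exp (c • (V * diagonal (RCLike.ofReal ∘ f) * star V))) =
      ∑ i, (Real.exp (c * f i) : 𝕜) := by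
  rw [exp_real_smul_unitary_conj_diagonal hV, trace_unitary_conj hV, trace_diagonal]
  rfl

theorem trace_exp_real_smul_unitary_conj_diagonal_mul (hV : V ∈ unitaryGroup n 𝕜) (c : ℝ)
    (f : n → ℝ) (B : Matrix n n 𝕜) :
    trace (NormedSpace.exp (c • (V * diagonal (RCLike.ofReal ∘ f) * star V)) * B) =
      ∑ i, (Real.exp (c * f i) : 𝕜) * (star V * B * V) i i := by
  rw [exp_real_smul_unitary_conj_diagonal hV, trace_conj_diagonal_mul]
  rfl

theorem conj_diagonal_apply_self (V : Matrix n n 𝕜) (f : n → ℝ) (i : n) :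
    (V * diagonal (RCLike.ofReal ∘ f : n → 𝕜) * star V) i i =
      ((∑ j, ‖V i j‖ ^ 2 * f j : ℝ) : 𝕜) := by
  rw [mul_apply]
  push_cast
  refine Finset.sum_congr rfl fun j _ => ?_
  rw [mul_diagonal, star_apply, RCLike.star_def, Function.comp_apply, mul_right_comm,
    RCLike.mul_conj, mul_comm]

theorem sum_norm_sq_unitary_row (hV : V ∈ unitaryGroup n 𝕜) (i : n) :
    ∑ j, ‖V i j‖ ^ 2 = 1 := by
  have h := conj_diagonal_apply_self V 1 i
  simp only [Pi.comp_one, map_one, Function.const_one, diagonal_one', mul_one,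
    Unitary.mul_star_self_of_mem hV, one_apply_eq, Pi.one_apply] at h
  exact_mod_cast h.symm

namespace IsHermitian

variable {A : Matrix n n 𝕜}

theorem exp_re_diag_le_re_exp_diag (hA : A.IsHermitian) (i : n) :
    Real.exp (RCLike.re (A i i)) ≤ RCLike.re (NormedSpace.exp A i i) := by
  have hW := hA.eigenvectorUnitary.2
  set W : Matrix n n 𝕜 := (hA.eigenvectorUnitary : Matrix n n 𝕜)
  have hA' : A = W * diagonal (RCLike.ofReal ∘ hA.eigenvalues) * star W := by
    simpa using hA.spectral_theorem
  rw [hA', exp_unitary_conj_diagonal hW, conj_diagonal_apply_self, conj_diagonal_apply_self,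
    RCLike.ofReal_re, RCLike.ofReal_re]
  simpa using convexOn_exp.map_sum_le (t := Finset.univ) (fun j _ => sq_nonneg _)
    (sum_norm_sq_unitary_row hW i) (fun j _ => Set.mem_univ (hA.eigenvalues j))

theorem sum_exp_re_diag_le_re_trace_exp (hA : A.IsHermitian) :
    ∑ i, Real.exp (RCLike.re (A i i)) ≤ RCLike.re (trace (NormedSpace.exp A)) := by
  rw [trace, map_sum]
  exact Finset.sum_le_sum fun i _ => hA.exp_re_diag_le_re_exp_diag i

theorem sum_exp_re_diag_unitary_conj_le (hA : A.IsHermitian) (hV : V ∈ unitaryGroup n 𝕜) :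
    ∑ i, Real.exp (RCLike.re ((star V * A * V) i i)) ≤
      RCLike.re (trace (NormedSpace.exp A)) := by
  have h := (isHermitian_conjTranspose_mul_mul V hA).sum_exp_re_diag_le_re_trace_exp
  have hexp := exp_unitary_conj (Unitary.star_mem hV) A
  have htr := trace_unitary_conj (Unitary.star_mem hV) (NormedSpace.exp A)
  rw [star_star] at hexp htr
  rwa [← star_eq_conjTranspose, hexp, htr] at h

theorem sum_exp_mul_exp_le_re_trace_exp_smul (hA : A.IsHermitian) (hV : V ∈ unitaryGroup n 𝕜)
    {B : Matrix n n 𝕜} {f : n → ℝ} (hB : star V * B * V = diagonal (RCLike.ofReal ∘ f)) (c : ℝ) :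
    ∑ i, Real.exp (c * f i) * Real.exp (c * RCLike.re ((star V * (A - B) * V) i i)) ≤
      RCLike.re (trace (NormedSpace.exp (c • A))) := by
  have h := (hA.smul (IsSelfAdjoint.all c)).sum_exp_re_diag_unitary_conj_le hV
  have hconj : star V * A * V = diagonal (RCLike.ofReal ∘ f) + star V * (A - B) * V := by
    rw [Matrix.mul_sub, Matrix.sub_mul, hB, add_sub_cancel]
  rw [mul_smul_comm, smul_mul_assoc, hconj] at h
  refine le_of_eq_of_le ?_ h
  simp [← Real.exp_add, RCLike.real_smul_eq_coe_mul]

end IsHermitian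

end Matrix

theorem classical_peierls_bogoliubov {ι : Type*} [Fintype ι] {β Z : ℝ} (hβ : 0 < β)
    (d w : ι → ℝ) (hd : ∀ i, 0 ≤ d i) (hd_sum : 0 < ∑ i, d i)
    (hZ : ∑ i, d i * Real.exp (-β * w i) ≤ Z) :
    -β⁻¹ * Real.log (Z / ∑ i, d i) ≤ (∑ i, d i * w i) / ∑ i, d i := by
  set T := (∑ i, d i * w i) / ∑ i, d i
  have jensen := convexOn_exp.map_centerMass_le (t := Finset.univ) (p := fun i => -β * w i)
    (fun i _ => hd i) hd_sum (fun i _ => Set.mem_univ _)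
  simp only [Finset.centerMass, smul_eq_mul, Function.comp_apply] at jensen
  have hT : -β * T = (∑ i, d i)⁻¹ * ∑ i, d i * (-β * w i) := by
    simp only [T, mul_left_comm _ (-β), ← Finset.mul_sum]
    ring
  have hexp_le : Real.exp (-β * T) ≤ Z / ∑ i, d i := by
    rw [hT, div_eq_inv_mul]
    exact jensen.trans (mul_le_mul_of_nonneg_left hZ (inv_nonneg.2 hd_sum.le))
  have hlog : -β * T ≤ Real.log (Z / ∑ i, d i) :=
    (Real.le_log_iff_exp_le ((Real.exp_pos _).trans_le hexp_le)).2 hexp_le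
  rw [neg_mul, neg_le, inv_mul_eq_div, le_div_iff₀ hβ]
  linarith

/-- Quantum Peierls–Bogoliubov upper bound:
`ΔF = −β⁻¹ log(Tr e^{−βH} / Tr e^{−βH₀}) ≤ Tr(ρ₀ U)`, where
`ρ₀ = e^{−βH₀}/Tr(e^{−βH₀})` and `U = H − H₀`. -/
theorem quantum_peierls_bogoliubov {m : ℕ} (β : ℝ) (hβ : 0 < β)
    (H H₀ U : Matrix (Fin m) (Fin m) ℂ)
    (hH : H.IsHermitian) (hH₀ : H₀.IsHermitian) (hU : U = H - H₀)
    (Z Z₀ : ℝ)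
    (hZ : Z = (NormedSpace.exp (((-β : ℝ) : ℂ) • H)).trace.re)
    (hZ₀ : Z₀ = (NormedSpace.exp (((-β : ℝ) : ℂ) • H₀)).trace.re)
    (ρ₀ : Matrix (Fin m) (Fin m) ℂ)
    (hρ₀ : ρ₀ = ((Z₀ : ℂ))⁻¹ • NormedSpace.exp (((-β : ℝ) : ℂ) • H₀)) :
    -β⁻¹ * Real.log (Z / Z₀) ≤ ((ρ₀ * U).trace).re := by
  rcases isEmpty_or_nonempty (Fin m) with hm | hm
  · -- `Z = Z₀ = 0` and `Real.log 0 = 0`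
    simp [hZ, hZ₀, Matrix.trace]
  have hV := hH₀.eigenvectorUnitary.2
  set V : Matrix (Fin m) (Fin m) ℂ := (hH₀.eigenvectorUnitary : Matrix (Fin m) (Fin m) ℂ)
  set μ := hH₀.eigenvalues
  have hH₀_eq : H₀ = V * diagonal (RCLike.ofReal ∘ μ) * star V := by
    simpa using hH₀.spectral_theorem
  have hH₀_diag : star V * H₀ * V = diagonal (RCLike.ofReal ∘ μ) := by
    simpa using hH₀.conjStarAlgAut_star_eigenvectorUnitary
  set d : Fin m → ℝ := fun i => Real.exp (-β * μ i)
  set w : Fin m → ℝ := fun i => ((star V * U * V) i i).re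
  rw [Complex.coe_smul, hH₀_eq] at hZ₀ hρ₀
  rw [Complex.coe_smul] at hZ
  have hZ₀_sum : Z₀ = ∑ i, d i := by
    rw [hZ₀, trace_exp_real_smul_unitary_conj_diagonal hV]
    simp only [← RCLike.re_to_complex, map_sum, RCLike.ofReal_re, d]
  have hρU : ((ρ₀ * U).trace).re = (∑ i, d i * w i) / ∑ i, d i := by
    rw [hρ₀, Matrix.smul_mul, trace_smul, trace_exp_real_smul_unitary_conj_diagonal_mul hV,
      ← hZ₀_sum, smul_eq_mul, ← Complex.ofReal_inv, Complex.re_ofReal_mul, Complex.re_sum,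
      div_eq_inv_mul]
    simp only [← RCLike.re_to_complex, RCLike.re_ofReal_mul, d, w]
  have hZ_ge : ∑ i, d i * Real.exp (-β * w i) ≤ Z := by
    have h := hH.sum_exp_mul_exp_le_re_trace_exp_smul hV hH₀_diag (-β)
    rw [← hU] at h
    exact h.trans_eq hZ.symm
  rw [hρU, hZ₀_sum]
  exact classical_peierls_bogoliubov hβ d w (fun i => (Real.exp_pos _).le)
    (Finset.sum_pos (fun i _ => Real.exp_pos _) Finset.univ_nonempty) hZ_ge
end

section
/- Two-sided quantum Bogoliubov inequality: Tr(ρ U) ≤ −β⁻¹ log(Z/Z₀) ≤ Tr(ρ₀ U). -/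
/-!
Both inequalities are instances of the Peierls–Bogoliubov inequality
`Tr (e^A B) / Tr e^A ≤ log (Tr e^(A+B) / Tr e^A)` for Hermitian `A`, `B`, applied to
`(A, B) = (-βH, βU)` and to `(-βH₀, -βU)`.

Let `a` be the eigenvalues of `A` and `b` the diagonal of `B` in an eigenbasis of `A`. In that
basis the diagonal of `A + B` is `a + b`; it is the image of the eigenvalues of `A + B` under the
doubly stochastic matrix `|P i j|²`, where `P` is the unitary change between the two eigenbases.
Convexity of `exp` therefore gives Peierls' inequality `∑ e^(aᵢ + bᵢ) ≤ Tr e^(A+B)`, and Jensen's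
inequality for the Gibbs weights `e^aᵢ / ∑ e^aⱼ` turns it into the Peierls–Bogoliubov inequality.
-/

open Matrix

namespace Matrix

variable {n : Type*} [Fintype n] [DecidableEq n]

lemma mul_diagonal_mul_star_apply_self (P : Matrix n n ℂ) (d : n → ℝ) (i : n) :
    (P * diagonal (RCLike.ofReal ∘ d : n → ℂ) * star P) i i =
      ∑ j, Complex.normSq (P i j) * d j := by
  rw [mul_apply, Complex.ofReal_sum]
  refine Finset.sum_congr rfl fun j _ => ?_
  simp only [mul_diagonal, star_apply, Function.comp_apply, Complex.ofReal_mul,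
    ← Complex.mul_conj, RCLike.star_def, RCLike.ofReal_eq_complex_ofReal]
  ring

lemma normSq_mem_doublyStochastic {P : Matrix n n ℂ} (hP : P ∈ unitaryGroup n ℂ) :
    of (fun i j => Complex.normSq (P i j)) ∈ doublyStochastic ℝ n := by
  refine mem_doublyStochastic_iff_sum.mpr
    ⟨fun _ _ => Complex.normSq_nonneg _, fun i => ?_, fun j => ?_⟩
  · have h := congr_fun₂ (mem_unitaryGroup_iff.mp hP) i i
    simpa [mul_apply, ← Complex.mul_conj, ← Complex.ofReal_inj] using h
  · have h := congr_fun₂ (mem_unitaryGroup_iff'.mp hP) j j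
    simpa [mul_apply, ← Complex.mul_conj, mul_comm, ← Complex.ofReal_inj] using h

end Matrix

theorem ConvexOn.sum_map_mulVec_le {n : Type*} [Fintype n] [DecidableEq n] {s : Set ℝ}
    {f : ℝ → ℝ} (hf : ConvexOn ℝ s f) {M : Matrix n n ℝ} (hM : M ∈ doublyStochastic ℝ n) {x : n → ℝ}
    (hx : ∀ i, x i ∈ s) : ∑ i, f ((M *ᵥ x) i) ≤ ∑ i, f (x i) :=
  calc ∑ i, f ((M *ᵥ x) i) ≤ ∑ i, ∑ j, M i j * f (x j) := by
        refine Finset.sum_le_sum fun i _ => ?_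
        simpa [mulVec, dotProduct] using hf.map_sum_le (t := Finset.univ) (w := M i) (p := x)
          (fun j _ => nonneg_of_mem_doublyStochastic hM) (sum_row_of_mem_doublyStochastic hM i)
          (fun j _ => hx j)
    _ = ∑ j, (∑ i, M i j) * f (x j) := by
        rw [Finset.sum_comm]; simp only [Finset.sum_mul]
    _ = ∑ j, f (x j) := by simp only [sum_col_of_mem_doublyStochastic hM, one_mul]

theorem Real.sum_exp_mul_div_sum_exp_le_log {ι : Type*} [Fintype ι] [Nonempty ι]
    (a b : ι → ℝ) :
    (∑ i, exp (a i) * b i) / ∑ i, exp (a i) ≤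
      log ((∑ i, exp (a i + b i)) / ∑ i, exp (a i)) := by
  set Z := ∑ i, exp (a i)
  have hZ : 0 < Z := Finset.sum_pos (fun i _ => exp_pos _) Finset.univ_nonempty
  rw [le_log_iff_exp_le (by positivity)]
  have hw : ∑ i, exp (a i) / Z = 1 := by rw [← Finset.sum_div, div_self hZ.ne']
  have := convexOn_exp.map_sum_le (t := Finset.univ) (w := fun i => exp (a i) / Z) (p := b)
    (fun i _ => by positivity) hw (fun i _ => Set.mem_univ _)
  simpa [Finset.sum_div, smul_eq_mul, exp_add, div_mul_eq_mul_div] using this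

namespace Matrix.IsHermitian

variable {n : Type*} [Fintype n] [DecidableEq n] {A : Matrix n n ℂ} (hA : A.IsHermitian)

lemma exp_eq_mul_diagonal_mul :
    NormedSpace.exp A = (hA.eigenvectorUnitary : Matrix n n ℂ) *
      diagonal (fun i => Complex.exp (hA.eigenvalues i)) *
        star (hA.eigenvectorUnitary : Matrix n n ℂ) := by
  have hinv : (hA.eigenvectorUnitary : Matrix n n ℂ)⁻¹ =
      star (hA.eigenvectorUnitary : Matrix n n ℂ) :=
    inv_eq_right_inv (Unitary.coe_mul_star_self _)
  conv_lhs => rw [hA.spectral_theorem, Unitary.conjStarAlgAut_apply, ← hinv]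
  rw [exp_conj _ _ Unitary.isUnit_coe, hinv, exp_diagonal]
  congr 3 with i
  simp [← Complex.exp_eq_exp_ℂ]

lemma re_trace_exp : (NormedSpace.exp A).trace.re = ∑ i, Real.exp (hA.eigenvalues i) := by
  rw [hA.exp_eq_mul_diagonal_mul, trace_mul_cycle, Unitary.coe_star_mul_self, one_mul,
    trace_diagonal, Complex.re_sum]
  exact Finset.sum_congr rfl fun i _ => Complex.exp_ofReal_re _

lemma re_trace_exp_mul (B : Matrix n n ℂ) :
    (NormedSpace.exp A * B).trace.re = ∑ i, Real.exp (hA.eigenvalues i) *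
      ((star (hA.eigenvectorUnitary : Matrix n n ℂ) * B * hA.eigenvectorUnitary) i i).re := by
  simp only [hA.exp_eq_mul_diagonal_mul, mul_assoc]
  rw [trace_mul_comm, mul_assoc, trace, Complex.re_sum]
  refine Finset.sum_congr rfl fun i _ => ?_
  rw [diag_apply, diagonal_mul, ← Complex.ofReal_exp, Complex.re_ofReal_mul, mul_assoc]

lemma re_star_mul_add_mul_apply_self (B : Matrix n n ℂ) (i : n) :
    ((star (hA.eigenvectorUnitary : Matrix n n ℂ) * (A + B) * hA.eigenvectorUnitary) i i).re =
      hA.eigenvalues i +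
        ((star (hA.eigenvectorUnitary : Matrix n n ℂ) * B * hA.eigenvectorUnitary) i i).re := by
  have hdiag := hA.conjStarAlgAut_star_eigenvectorUnitary
  rw [Unitary.conjStarAlgAut_apply, Unitary.coe_star, star_star] at hdiag
  rw [mul_add, add_mul, add_apply, hdiag, diagonal_apply_eq, Complex.add_re]
  rfl

theorem sum_exp_re_star_mul_mul_apply_self_le {C : Matrix n n ℂ} (hC : C.IsHermitian)
    {V : Matrix n n ℂ} (hV : V ∈ unitaryGroup n ℂ) :
    ∑ i, Real.exp ((star V * C * V) i i).re ≤ (NormedSpace.exp C).trace.re := by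
  set W := (hC.eigenvectorUnitary : Matrix n n ℂ)
  set P := star V * W
  have hP : P ∈ unitaryGroup n ℂ := mul_mem (Unitary.star_mem hV) hC.eigenvectorUnitary.2
  have hconj : star V * C * V = P * diagonal (RCLike.ofReal ∘ hC.eigenvalues) * star P := by
    conv_lhs => rw [hC.spectral_theorem, Unitary.conjStarAlgAut_apply]
    simp only [P, W, star_mul, star_star, mul_assoc]
  have hdiag (i : n) : ((star V * C * V) i i).re =
      (of (fun i j => Complex.normSq (P i j)) *ᵥ hC.eigenvalues) i := by
    rw [hconj, mul_diagonal_mul_star_apply_self, Complex.ofReal_re]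
    rfl
  simp only [hdiag, hC.re_trace_exp]
  exact convexOn_exp.sum_map_mulVec_le (normSq_mem_doublyStochastic hP) fun _ => Set.mem_univ _

end Matrix.IsHermitian

theorem Matrix.IsHermitian.re_trace_exp_mul_div_le_log {n : Type*} [Fintype n] [DecidableEq n]
    {A B : Matrix n n ℂ} (hA : A.IsHermitian) (hB : B.IsHermitian) :
    (NormedSpace.exp A * B).trace.re / (NormedSpace.exp A).trace.re ≤
      Real.log ((NormedSpace.exp (A + B)).trace.re / (NormedSpace.exp A).trace.re) := by
  cases isEmpty_or_nonempty n
  · simp [trace] -- both sides are `0 / 0 = 0` and `log 0 = 0`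
  set V := (hA.eigenvectorUnitary : Matrix n n ℂ)
  have peierls : ∑ i, Real.exp (hA.eigenvalues i + ((star V * B * V) i i).re) ≤
      (NormedSpace.exp (A + B)).trace.re := by
    simpa only [V, hA.re_star_mul_add_mul_apply_self] using
      (hA.add hB).sum_exp_re_star_mul_mul_apply_self_le hA.eigenvectorUnitary.2
  rw [hA.re_trace_exp_mul, hA.re_trace_exp]
  exact (Real.sum_exp_mul_div_sum_exp_le_log _ _).trans
    (Real.log_le_log (by positivity) (div_le_div_of_nonneg_right peierls (by positivity)))

/-- Two-sided quantum Bogoliubov inequality: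
`Tr(ρ U) ≤ −β⁻¹ log(Z/Z₀) ≤ Tr(ρ₀ U)` for `H = H₀ + U`. -/
theorem quantum_two_sided_bogoliubov {m : ℕ} (β : ℝ) (hβ : 0 < β)
    (H H₀ U : Matrix (Fin m) (Fin m) ℂ)
    (hH₀ : H₀.IsHermitian) (hUh : U.IsHermitian) (hH : H = H₀ + U)
    (Z Z₀ : ℝ)
    (hZ : Z = (NormedSpace.exp (((-β : ℝ) : ℂ) • H)).trace.re)
    (hZ₀ : Z₀ = (NormedSpace.exp (((-β : ℝ) : ℂ) • H₀)).trace.re)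
    (ρ ρ₀ : Matrix (Fin m) (Fin m) ℂ)
    (hρ : ρ = ((Z : ℂ))⁻¹ • NormedSpace.exp (((-β : ℝ) : ℂ) • H))
    (hρ₀ : ρ₀ = ((Z₀ : ℂ))⁻¹ • NormedSpace.exp (((-β : ℝ) : ℂ) • H₀)) :
    ((ρ * U).trace).re ≤ -β⁻¹ * Real.log (Z / Z₀) ∧
      -β⁻¹ * Real.log (Z / Z₀) ≤ ((ρ₀ * U).trace).re := by
  have ofReal_smul (r : ℝ) {X : Matrix (Fin m) (Fin m) ℂ} (hX : X.IsHermitian) :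
      ((r : ℂ) • X).IsHermitian := hX.smul (Complex.conj_ofReal r)
  have upper := (ofReal_smul (-β) (hH ▸ hH₀.add hUh)).re_trace_exp_mul_div_le_log
    (ofReal_smul β hUh)
  have lower := (ofReal_smul (-β) hH₀).re_trace_exp_mul_div_le_log (ofReal_smul (-β) hUh)
  rw [show ((-β : ℝ) : ℂ) • H + (β : ℂ) • U = ((-β : ℝ) : ℂ) • H₀ by rw [hH]; module] at upper
  rw [← smul_add, ← hH] at lower
  rw [← hZ, ← hZ₀] at upper lower
  subst hρ hρ₀
  simp only [Matrix.smul_mul, Matrix.mul_smul, trace_smul, smul_eq_mul, ← Complex.ofReal_inv,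
    Complex.re_ofReal_mul] at upper lower ⊢
  rw [← inv_div Z Z₀, Real.log_inv] at upper
  set c := (NormedSpace.exp (((-β : ℝ) : ℂ) • H) * U).trace.re
  set c₀ := (NormedSpace.exp (((-β : ℝ) : ℂ) • H₀) * U).trace.re
  constructor
  · calc Z⁻¹ * c = β⁻¹ * (β * c / Z) := by field_simp
      _ ≤ β⁻¹ * -Real.log (Z / Z₀) := by gcongr
      _ = -β⁻¹ * Real.log (Z / Z₀) := by ring
  · calc -β⁻¹ * Real.log (Z / Z₀) ≤ -β⁻¹ * (-β * c₀ / Z₀) :=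
          mul_le_mul_of_nonpos_left lower (by simp [hβ.le])
      _ = Z₀⁻¹ * c₀ := by field_simp
end
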